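/- arXiv:1306.0736 — 2 statements merged into one kernel-verified Lean document; each statement's English description precedes it below -/
import Mathlib

section
/- Let X > 80 be an integer with 3 ∤ X, and let 1 ≤ i ≤ 7. If the greatest prime factor of X(X + 3i) is exactly 5 and 2 divides X(X + 3i), then (i, X) ∈ {(1, 125), (2, 250), (4, 500), (5, 625)}. -/
set_option maxRecDepth 10000

lemma pow_cycle (a T M : ℕ) (h : a ^ T % M = 1) (n : ℕ) :
    a ^ n % M = a ^ (n % T) % M := by
  have hM : 1 % M = 1 := by
    match M, h with
    | 0, h => rfl
    | 1, h => exact absurd h (by omega)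
    | (m+2), h => exact Nat.one_mod_eq_one.mpr (by omega)
  conv_lhs => rw [← Nat.div_add_mod n T, pow_add, pow_mul, Nat.mul_mod, Nat.pow_mod, h,
    one_pow, hM, one_mul, Nat.mod_mod_of_dvd _ dvd_rfl]

lemma no5dvd (e : ℕ) : ¬ (5 ∣ 2 ^ e) := by
  intro h
  have := Nat.Prime.dvd_of_dvd_pow (by norm_num : Nat.Prime 5) h
  omega

lemma E1 (b e : ℕ) (hb : 2 ≤ b) (h : 2 ^ e = 5 ^ b + 3) : b = 3 ∧ e = 7 := by
  have h25 : 25 ≤ 5 ^ b := by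
    calc (25:ℕ) = 5 ^ 2 := by norm_num
    _ ≤ 5 ^ b := Nat.pow_le_pow_right (by norm_num) hb
  have he5 : 5 ≤ e := by
    by_contra hc
    have : 2 ^ e ≤ 2 ^ 4 := Nat.pow_le_pow_right (by norm_num) (by omega)
    omega
  have h32 : 5 ^ b % 32 = 29 := by
    obtain ⟨k, hk⟩ : (32:ℕ) ∣ 2 ^ e := by
      have : (2:ℕ) ^ 5 ∣ 2 ^ e := pow_dvd_pow 2 he5
      simpa using this
    omega
  have hb8 : b % 8 = 3 := by
    have hp : 5 ^ b % 32 = 5 ^ (b % 8) % 32 := pow_cycle 5 8 32 (by norm_num) b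
    have hlt : b % 8 < 8 := Nat.mod_lt _ (by norm_num)
    rw [h32] at hp
    interval_cases hbm : b % 8 <;> simp_all
  by_cases hb3 : b = 3
  · subst hb3
    refine ⟨rfl, ?_⟩
    have : (2:ℕ) ^ e = 2 ^ 7 := by norm_num at h ⊢; omega
    exact Nat.pow_right_injective (le_refl 2) this
  · exfalso
    have hb11 : 11 ≤ b := by omega
    have h511 : (48828125:ℕ) ≤ 5 ^ b := by
      calc (48828125:ℕ) = 5 ^ 11 := by norm_num
      _ ≤ 5 ^ b := Nat.pow_le_pow_right (by norm_num) hb11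
    have he9 : 9 ≤ e := by
      by_contra hc
      have : 2 ^ e ≤ 2 ^ 8 := Nat.pow_le_pow_right (by norm_num) (by omega)
      omega
    have h256 : 5 ^ b % 256 = 253 := by
      obtain ⟨k, hk⟩ : (256:ℕ) ∣ 2 ^ e := by
        have : (2:ℕ) ^ 8 ∣ 2 ^ e := pow_dvd_pow 2 (by omega)
        simpa using this
      omega
    have hb64 : b % 64 = 35 := by
      have hp : 5 ^ b % 256 = 5 ^ (b % 64) % 256 := pow_cycle 5 64 256 (by norm_num) b
      rw [h256] at hp
      have hlt : b % 64 < 64 := Nat.mod_lt _ (by norm_num)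
      have : ∀ r : ℕ, r < 64 → 5 ^ r % 256 = 253 → r = 35 := by decide
      exact this _ hlt hp.symm
    have hA : 2 ^ e % 257 = 2 ^ (e % 16) % 257 := pow_cycle 2 16 257 (by norm_num) e
    have hB : 5 ^ b % 257 = 5 ^ (b % 256) % 257 := pow_cycle 5 256 257 (by norm_num) b
    have hbm : b % 256 % 64 = 35 := by
      rw [Nat.mod_mod_of_dvd b (by norm_num : (64:ℕ) ∣ 256)]; exact hb64
    have key : (5 ^ (b % 256) % 257 + 3) % 257 = 2 ^ (e % 16) % 257 := by
      rw [← hA, ← hB, h, Nat.add_mod, Nat.mod_mod_of_dvd _ dvd_rfl]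
      norm_num
    have final : ∀ r : ℕ, r < 256 → r % 64 = 35 → ∀ s : ℕ, s < 16 →
        (5 ^ r % 257 + 3) % 257 ≠ 2 ^ s % 257 := by decide
    exact final _ (Nat.mod_lt _ (by norm_num)) hbm _ (Nat.mod_lt _ (by norm_num)) key

lemma E5 (b e : ℕ) (hb : 2 ≤ b) (h : 2 ^ e = 5 ^ b + 9) : False := by
  have h25 : 25 ≤ 5 ^ b := by
    calc (25:ℕ) = 5 ^ 2 := by norm_num
    _ ≤ 5 ^ b := Nat.pow_le_pow_right (by norm_num) hb
  have he : 5 ≤ e := by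
    by_contra hc
    have : 2 ^ e ≤ 2 ^ 4 := Nat.pow_le_pow_right (by norm_num) (by omega)
    omega
  obtain ⟨k, hk⟩ : (8:ℕ) ∣ 2 ^ e := by
    have : (2:ℕ) ^ 3 ∣ 2 ^ e := pow_dvd_pow 2 (by omega)
    simpa using this
  have h8 : 5 ^ b % 8 = 7 := by omega
  have hp : 5 ^ b % 8 = 5 ^ (b % 2) % 8 := pow_cycle 5 2 8 (by norm_num) b
  have hlt : b % 2 < 2 := Nat.mod_lt _ (by norm_num)
  interval_cases hbm : b % 2 <;> simp_all

lemma E6 (b e : ℕ) (hb : 2 ≤ b) (h : 2 ^ e = 5 ^ b + 21) : False := by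
  have h25 : 25 ≤ 5 ^ b := by
    calc (25:ℕ) = 5 ^ 2 := by norm_num
    _ ≤ 5 ^ b := Nat.pow_le_pow_right (by norm_num) hb
  have he : 5 ≤ e := by
    by_contra hc
    have : 2 ^ e ≤ 2 ^ 4 := Nat.pow_le_pow_right (by norm_num) (by omega)
    omega
  obtain ⟨k, hk⟩ : (8:ℕ) ∣ 2 ^ e := by
    have : (2:ℕ) ^ 3 ∣ 2 ^ e := pow_dvd_pow 2 (by omega)
    simpa using this
  have h8 : 5 ^ b % 8 = 3 := by omega
  have hp : 5 ^ b % 8 = 5 ^ (b % 2) % 8 := pow_cycle 5 2 8 (by norm_num) b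
  have hlt : b % 2 < 2 := Nat.mod_lt _ (by norm_num)
  interval_cases hbm : b % 2 <;> simp_all

lemma E4 (g a : ℕ) (ha : 5 ≤ a) (h : 5 ^ g = 2 ^ a + 3) : False := by
  obtain ⟨k, hk⟩ : (32:ℕ) ∣ 2 ^ a := by
    have : (2:ℕ) ^ 5 ∣ 2 ^ a := pow_dvd_pow 2 ha
    simpa using this
  have h32 : 5 ^ g % 32 = 3 := by omega
  have hp : 5 ^ g % 32 = 5 ^ (g % 8) % 32 := pow_cycle 5 8 32 (by norm_num) g
  have hlt : g % 8 < 8 := Nat.mod_lt _ (by norm_num)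
  interval_cases hgm : g % 8 <;> simp_all

lemma E2 (d e : ℕ) (hd : 2 ≤ d) (he : 5 ≤ e) (h : 5 ^ d = 2 ^ e + 9) : False := by
  obtain ⟨k, hk⟩ : (8:ℕ) ∣ 2 ^ e := by
    have : (2:ℕ) ^ 3 ∣ 2 ^ e := pow_dvd_pow 2 (by omega)
    simpa using this
  have h8 : 5 ^ d % 8 = 1 := by omega
  have hdeven : d % 2 = 0 := by
    have hp : 5 ^ d % 8 = 5 ^ (d % 2) % 8 := pow_cycle 5 2 8 (by norm_num) d
    have hlt : d % 2 < 2 := Nat.mod_lt _ (by norm_num)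
    interval_cases hdm : d % 2 <;> simp_all
  obtain ⟨f, hf⟩ : ∃ f, d = 2 * f := ⟨d / 2, by omega⟩
  have hf1 : 1 ≤ f := by omega
  set A := 5 ^ f with hA
  have hA5 : 5 ≤ A := by
    calc (5:ℕ) = 5 ^ 1 := by norm_num
    _ ≤ 5 ^ f := Nat.pow_le_pow_right (by norm_num) hf1
  have hA2 : A * A = 2 ^ e + 9 := by
    rw [hA, ← pow_add]
    rw [hf] at h
    convert h using 2
    omega
  have hfac : (A - 3) * (A + 3) = 2 ^ e := by
    obtain ⟨B, hB⟩ : ∃ B, A = B + 3 := ⟨A - 3, by omega⟩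
    rw [hB] at hA2 ⊢
    have h1 : B + 3 - 3 = B := by omega
    rw [h1]
    have expand : (B + 3) * (B + 3) = B * (B + 3 + 3) + 9 := by ring
    linarith [expand, hA2]
  have hdvd : A - 3 ∣ 2 ^ e := ⟨A + 3, hfac.symm⟩
  obtain ⟨s, hs, hsA⟩ := (Nat.dvd_prime_pow Nat.prime_two).mp hdvd
  have hAmod : A % 4 = 1 := by
    rw [hA]
    have hp := pow_cycle 5 1 4 (by norm_num) f
    simpa [Nat.mod_one] using hp
  have hs1 : A - 3 = 2 := by
    rcases s with _ | _ | s
    · simp at hsA; omega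
    · simpa using hsA
    · exfalso
      obtain ⟨t, ht⟩ : ∃ t, (2:ℕ) ^ (s + 2) = 4 * t := ⟨2 ^ s, by ring⟩
      omega
  have hfeq : f = 1 := by
    by_contra hc
    have hf2 : 2 ≤ f := by omega
    have : 25 ≤ A := by
      rw [hA]
      calc (25:ℕ) = 5 ^ 2 := by norm_num
      _ ≤ 5 ^ f := Nat.pow_le_pow_right (by norm_num) hf2
    omega
  rw [hfeq] at hf
  rw [hf] at h
  norm_num at h
  have : 2 ^ 5 ≤ 2 ^ e := Nat.pow_le_pow_right (by norm_num) he
  omega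

lemma E3 (d e : ℕ) (hd : 2 ≤ d) (he : 5 ≤ e) (h : 5 ^ d = 2 ^ e + 21) : False := by
  obtain ⟨k, hk⟩ : (8:ℕ) ∣ 2 ^ e := by
    have : (2:ℕ) ^ 3 ∣ 2 ^ e := pow_dvd_pow 2 (by omega)
    simpa using this
  have h8 : 5 ^ d % 8 = 5 := by omega
  have hdodd : d % 2 = 1 := by
    have hp : 5 ^ d % 8 = 5 ^ (d % 2) % 8 := pow_cycle 5 2 8 (by norm_num) d
    have hlt : d % 2 < 2 := Nat.mod_lt _ (by norm_num)
    interval_cases hdm : d % 2 <;> simp_all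
  have h3 : 5 ^ d % 3 = 2 := by
    have hp : 5 ^ d % 3 = 5 ^ (d % 2) % 3 := pow_cycle 5 2 3 (by norm_num) d
    rw [hp, hdodd]; norm_num
  have heodd : e % 2 = 1 := by
    have h2e : 2 ^ e % 3 = 2 := by omega
    have hp : 2 ^ e % 3 = 2 ^ (e % 2) % 3 := pow_cycle 2 2 3 (by norm_num) e
    have hlt : e % 2 < 2 := Nat.mod_lt _ (by norm_num)
    interval_cases hem : e % 2 <;> simp_all
  obtain ⟨k2, hk2⟩ : (25:ℕ) ∣ 5 ^ d := by
    have : (5:ℕ) ^ 2 ∣ 5 ^ d := pow_dvd_pow 5 hd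
    simpa using this
  have h25 : 2 ^ e % 25 = 4 := by omega
  have hp : 2 ^ e % 25 = 2 ^ (e % 20) % 25 := pow_cycle 2 20 25 (by norm_num) e
  have h20 : e % 20 = 2 := by
    rw [hp] at h25
    have hlt : e % 20 < 20 := Nat.mod_lt _ (by norm_num)
    have : ∀ r : ℕ, r < 20 → 2 ^ r % 25 = 4 → r = 2 := by decide
    exact this _ hlt h25
  omega

lemma smooth : ∀ n : ℕ, 0 < n → (∀ p, p.Prime → p ∣ n → p = 2 ∨ p = 5) →
    ∃ a b : ℕ, n = 2 ^ a * 5 ^ b := by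
  intro n
  induction n using Nat.strong_induction_on with
  | _ n ih =>
    intro hn h
    by_cases h1 : n = 1
    · exact ⟨0, 0, by simp [h1]⟩
    · have hpf : n.minFac.Prime := Nat.minFac_prime h1
      have hdvd : n.minFac ∣ n := Nat.minFac_dvd n
      have hq := h _ hpf hdvd
      obtain ⟨m, hm⟩ := hdvd
      have hmpos : 0 < m := by
        rcases Nat.eq_zero_or_pos m with h0 | h0
        · rw [h0, mul_zero] at hm; omega
        · exact h0
      have hml : m < n := by
        have h2 : 2 ≤ n.minFac := hpf.two_le
        calc m < 2 * m := by omega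
        _ ≤ n.minFac * m := Nat.mul_le_mul_right m h2
        _ = n := hm.symm
      have hsub : ∀ p, p.Prime → p ∣ m → p = 2 ∨ p = 5 := fun p hp hpm =>
        h p hp (hpm.trans ⟨n.minFac, by rw [mul_comm]; exact hm⟩)
      obtain ⟨a, b, hab⟩ := ih m hml hmpos hsub
      rcases hq with hq | hq
      · exact ⟨a + 1, b, by rw [hm, hab, hq]; ring⟩
      · exact ⟨a, b + 1, by rw [hm, hab, hq]; ring⟩

/-- If `X > 80`, `3 ∤ X`, `1 ≤ i ≤ 7`, the greatest prime factor of `X(X+3i)`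
is exactly `5`, and `2 ∣ X(X+3i)`, then `(i, X)` is one of the listed pairs. -/
theorem stmt6 (X i : ℕ) (hX : 80 < X) (h3 : ¬ (3 ∣ X)) (hi1 : 1 ≤ i) (hi7 : i ≤ 7)
    (hmax : ∀ p : ℕ, p.Prime → p ∣ X * (X + 3 * i) → p ≤ 5)
    (h5 : 5 ∣ X * (X + 3 * i))
    (h2 : 2 ∣ X * (X + 3 * i)) :
    (i = 1 ∧ X = 125) ∨ (i = 2 ∧ X = 250) ∨ (i = 4 ∧ X = 500) ∨ (i = 5 ∧ X = 625) := by
  have hprX : ∀ p, p.Prime → p ∣ X → p = 2 ∨ p = 5 := by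
    intro p hp hpd
    have hle := hmax p hp (hpd.mul_right _)
    have h2le := hp.two_le
    interval_cases p
    · exact Or.inl rfl
    · exact absurd hpd h3
    · exact absurd hp (by norm_num)
    · exact Or.inr rfl
  have hprY : ∀ p, p.Prime → p ∣ X + 3 * i → p = 2 ∨ p = 5 := by
    intro p hp hpd
    have hle := hmax p hp (hpd.mul_left _)
    have h2le := hp.two_le
    interval_cases p
    · exact Or.inl rfl
    · exact absurd (show (3:ℕ) ∣ X by omega) h3
    · exact absurd hp (by norm_num)
    · exact Or.inr rfl
  obtain ⟨a, b, hab⟩ := smooth X (by omega) hprX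
  obtain ⟨c, d, hcd⟩ := smooth (X + 3 * i) (by omega) hprY
  have hsize : ∀ u v : ℕ, u ≤ 2 → v ≤ 1 → 2 ^ u * 5 ^ v ≤ 20 := by
    intro u v hu hv
    have h1 : 2 ^ u ≤ 2 ^ 2 := Nat.pow_le_pow_right (by norm_num) hu
    have h2 : 5 ^ v ≤ 5 ^ 1 := Nat.pow_le_pow_right (by norm_num) hv
    calc 2 ^ u * 5 ^ v ≤ 2 ^ 2 * 5 ^ 1 := Nat.mul_le_mul h1 h2
    _ = 20 := by norm_num
  have hmin2 : a ≤ 2 ∨ c ≤ 2 := by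
    by_contra hcon
    push_neg at hcon
    obtain ⟨ha3, hc3⟩ := hcon
    obtain ⟨u, hu⟩ : (8:ℕ) ∣ X := by
      rw [hab]
      refine dvd_mul_of_dvd_left ?_ _
      have h8 : (2:ℕ) ^ 3 ∣ 2 ^ a := pow_dvd_pow 2 (by omega)
      simpa using h8
    obtain ⟨v, hv⟩ : (8:ℕ) ∣ X + 3 * i := by
      rw [hcd]
      refine dvd_mul_of_dvd_left ?_ _
      have h8 : (2:ℕ) ^ 3 ∣ 2 ^ c := pow_dvd_pow 2 (by omega)
      simpa using h8
    omega
  have hmin5 : b ≤ 1 ∨ d ≤ 1 := by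
    by_contra hcon
    push_neg at hcon
    obtain ⟨hb2, hd2⟩ := hcon
    obtain ⟨u, hu⟩ : (25:ℕ) ∣ X := by
      rw [hab]
      refine dvd_mul_of_dvd_right ?_ _
      have h25 : (5:ℕ) ^ 2 ∣ 5 ^ b := pow_dvd_pow 5 (by omega)
      simpa using h25
    obtain ⟨v, hv⟩ : (25:ℕ) ∣ X + 3 * i := by
      rw [hcd]
      refine dvd_mul_of_dvd_right ?_ _
      have h25 : (5:ℕ) ^ 2 ∣ 5 ^ d := pow_dvd_pow 5 (by omega)
      simpa using h25
    omega
  rcases hmin2 with ha2 | hc2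
  · -- a ≤ 2, so b ≥ 2, d ≤ 1, c ≥ 3
    have hb2 : 2 ≤ b := by
      by_contra hcon
      have := hsize a b ha2 (by omega)
      omega
    have hd1 : d ≤ 1 := by
      rcases hmin5 with h | h
      · omega
      · exact h
    have hc3 : 3 ≤ c := by
      by_contra hcon
      have := hsize c d (by omega) hd1
      omega
    interval_cases d
    · -- d = 0 : X + 3i = 2^c
      have hdX : (2:ℕ) ^ a ∣ X := ⟨5 ^ b, hab⟩
      have hdY : (2:ℕ) ^ a ∣ X + 3 * i := by
        rw [hcd]
        exact dvd_mul_of_dvd_left (pow_dvd_pow 2 (by omega)) _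
      obtain ⟨m, hm⟩ := (Nat.dvd_add_right hdX).mp hdY
      have h1 : 2 ^ a * (5 ^ b + m) = 2 ^ a * 2 ^ (c - a) := by
        calc 2 ^ a * (5 ^ b + m) = X + 3 * i := by rw [mul_add, ← hab, ← hm]
        _ = 2 ^ c * 5 ^ 0 := hcd
        _ = 2 ^ a * 2 ^ (c - a) := by
            rw [pow_zero, mul_one, ← pow_add, show a + (c - a) = c by omega]
      have heq : 5 ^ b + m = 2 ^ (c - a) :=
        Nat.eq_of_mul_eq_mul_left (pow_pos (by norm_num) a) h1
      have hmodd : m % 2 = 1 := by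
        by_contra hcon
        have h5odd : 5 ^ b % 2 = 1 := by
          have := pow_cycle 5 1 2 (by norm_num) b
          simpa [Nat.mod_one] using this
        obtain ⟨w, hw⟩ : ∃ w, 2 ^ (c - a) = 2 * w :=
          ⟨2 ^ (c - a - 1), by rw [← pow_succ', show c - a - 1 + 1 = c - a by omega]⟩
        omega
      interval_cases a
      · norm_num at hm heq
        have hm' : m = 3 ∨ m = 9 ∨ m = 15 ∨ m = 21 := by omega
        rcases hm' with h | h | h | h
        · obtain ⟨hb3, -⟩ := E1 b c hb2 (by rw [h] at heq; exact heq.symm)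
          exact Or.inl ⟨by omega, by rw [hab, hb3]; norm_num⟩
        · exact (E5 b c hb2 (by rw [h] at heq; exact heq.symm)).elim
        · exfalso
          obtain ⟨w, hw⟩ : ∃ w, (5:ℕ) ^ b = 5 * w :=
            ⟨5 ^ (b - 1), by rw [← pow_succ', show b - 1 + 1 = b by omega]⟩
          exact no5dvd c (by omega)
        · exact (E6 b c hb2 (by rw [h] at heq; exact heq.symm)).elim
      · norm_num at hm
        have hm' : m = 3 ∨ m = 9 := by omega
        rcases hm' with h | h
        · obtain ⟨hb3, -⟩ := E1 b (c - 1) hb2 (by rw [h] at heq; exact heq.symm)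
          exact Or.inr (Or.inl ⟨by omega, by rw [hab, hb3]; norm_num⟩)
        · exact (E5 b (c - 1) hb2 (by rw [h] at heq; exact heq.symm)).elim
      · norm_num at hm
        have hm' : m = 3 := by omega
        rw [hm'] at heq
        obtain ⟨hb3, -⟩ := E1 b (c - 2) hb2 heq.symm
        exact Or.inr (Or.inr (Or.inl ⟨by omega, by rw [hab, hb3]; norm_num⟩))
    · -- d = 1 : X + 3i = 2^c * 5
      have h5X : (5:ℕ) ∣ X := by
        rw [hab]
        exact dvd_mul_of_dvd_right (dvd_pow_self 5 (by omega)) _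
      have h5Y : (5:ℕ) ∣ X + 3 * i := by
        rw [hcd]
        exact ⟨2 ^ c, by ring⟩
      have hi5 : i = 5 := by omega
      have ha0 : a = 0 := by
        by_contra hcon
        have h2X : (2:ℕ) ∣ X := by
          rw [hab]
          exact dvd_mul_of_dvd_left (dvd_pow_self 2 (by omega)) _
        have h2Y : (2:ℕ) ∣ X + 3 * i := by
          rw [hcd]
          exact dvd_mul_of_dvd_left (dvd_pow_self 2 (by omega)) _
        omega
      rw [ha0, pow_zero, one_mul] at hab
      have hb3 : 3 ≤ b := by
        by_contra hcon
        have h5b : (5:ℕ) ^ b ≤ 25 := by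
          calc (5:ℕ) ^ b ≤ 5 ^ 2 := Nat.pow_le_pow_right (by norm_num) (by omega)
          _ = 25 := by norm_num
        omega
      have hfin : 5 * (5 ^ (b - 1) + 3) = 5 * 2 ^ c := by
        have h51 : (5:ℕ) ^ b = 5 * 5 ^ (b - 1) := by
          rw [← pow_succ', show b - 1 + 1 = b by omega]
        calc 5 * (5 ^ (b - 1) + 3) = 5 ^ b + 15 := by rw [mul_add, ← h51]
        _ = X + 3 * i := by rw [hab, hi5]
        _ = 2 ^ c * 5 ^ 1 := hcd
        _ = 5 * 2 ^ c := by ring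
      have heq : 5 ^ (b - 1) + 3 = 2 ^ c := Nat.eq_of_mul_eq_mul_left (by norm_num) hfin
      obtain ⟨hb4, -⟩ := E1 (b - 1) c (by omega) heq.symm
      exact Or.inr (Or.inr (Or.inr ⟨hi5, by rw [hab, show b = 4 by omega]; norm_num⟩))
  · -- c ≤ 2, so d ≥ 2, b ≤ 1, a ≥ 3
    have hd2 : 2 ≤ d := by
      by_contra hcon
      have := hsize c d hc2 (by omega)
      omega
    have hb1 : b ≤ 1 := by
      rcases hmin5 with h | h
      · exact h
      · omega
    have ha3 : 3 ≤ a := by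
      by_contra hcon
      have := hsize a b (by omega) hb1
      omega
    exfalso
    interval_cases b
    · -- b = 0 : X = 2^a
      rw [pow_zero, mul_one] at hab
      have ha7 : 7 ≤ a := by
        by_contra hcon
        have h2a : (2:ℕ) ^ a ≤ 64 := by
          calc (2:ℕ) ^ a ≤ 2 ^ 6 := Nat.pow_le_pow_right (by norm_num) (by omega)
          _ = 64 := by norm_num
        omega
      have hdX : (2:ℕ) ^ c ∣ X := by
        rw [hab]; exact pow_dvd_pow 2 (by omega)
      have hdY : (2:ℕ) ^ c ∣ X + 3 * i := by
        rw [hcd]; exact dvd_mul_of_dvd_left dvd_rfl _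
      obtain ⟨m, hm⟩ := (Nat.dvd_add_right hdX).mp hdY
      have h1 : 2 ^ c * (2 ^ (a - c) + m) = 2 ^ c * 5 ^ d := by
        calc 2 ^ c * (2 ^ (a - c) + m) = 2 ^ a + 2 ^ c * m := by
              rw [mul_add, ← pow_add, show c + (a - c) = a by omega]
        _ = X + 3 * i := by rw [hab, ← hm]
        _ = 2 ^ c * 5 ^ d := hcd
      have heq : 2 ^ (a - c) + m = 5 ^ d :=
        Nat.eq_of_mul_eq_mul_left (pow_pos (by norm_num) c) h1
      have hE5 : 5 ≤ a - c := by omega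
      have hmodd : m % 2 = 1 := by
        by_contra hcon
        have h5odd : 5 ^ d % 2 = 1 := by
          have := pow_cycle 5 1 2 (by norm_num) d
          simpa [Nat.mod_one] using this
        obtain ⟨w, hw⟩ : ∃ w, 2 ^ (a - c) = 2 * w :=
          ⟨2 ^ (a - c - 1), by rw [← pow_succ', show a - c - 1 + 1 = a - c by omega]⟩
        omega
      interval_cases c
      · norm_num at hm heq
        have hm' : m = 3 ∨ m = 9 ∨ m = 15 ∨ m = 21 := by omega
        rcases hm' with h | h | h | h
        · exact E4 d a hE5 (by rw [h] at heq; exact heq.symm)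
        · exact E2 d a hd2 (by omega) (by rw [h] at heq; exact heq.symm)
        · obtain ⟨w, hw⟩ : ∃ w, (5:ℕ) ^ d = 5 * w :=
            ⟨5 ^ (d - 1), by rw [← pow_succ', show d - 1 + 1 = d by omega]⟩
          exact no5dvd a (by omega)
        · exact E3 d a hd2 (by omega) (by rw [h] at heq; exact heq.symm)
      · norm_num at hm
        have hm' : m = 3 ∨ m = 9 := by omega
        rcases hm' with h | h
        · exact E4 d (a - 1) hE5 (by rw [h] at heq; exact heq.symm)
        · exact E2 d (a - 1) hd2 (by omega) (by rw [h] at heq; exact heq.symm)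
      · norm_num at hm
        have hm' : m = 3 := by omega
        rw [hm'] at heq
        exact E4 d (a - 2) hE5 heq.symm
    · -- b = 1 : X = 2^a * 5
      rw [pow_one] at hab
      have ha5 : 5 ≤ a := by
        by_contra hcon
        have h2a : (2:ℕ) ^ a ≤ 16 := by
          calc (2:ℕ) ^ a ≤ 2 ^ 4 := Nat.pow_le_pow_right (by norm_num) (by omega)
          _ = 16 := by norm_num
        omega
      have h5X : (5:ℕ) ∣ X := by
        rw [hab]; exact dvd_mul_left 5 (2 ^ a)
      have h5Y : (5:ℕ) ∣ X + 3 * i := by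
        rw [hcd]
        exact dvd_mul_of_dvd_right (dvd_pow_self 5 (by omega)) _
      have hi5 : i = 5 := by omega
      have hc0 : c = 0 := by
        by_contra hcon
        have h2Y : (2:ℕ) ∣ X + 3 * i := by
          rw [hcd]
          exact dvd_mul_of_dvd_left (dvd_pow_self 2 (by omega)) _
        have h2X : (2:ℕ) ∣ X := by
          rw [hab]
          exact dvd_mul_of_dvd_left (dvd_pow_self 2 (by omega)) _
        omega
      rw [hc0, pow_zero, one_mul] at hcd
      have hfin : 5 * (2 ^ a + 3) = 5 * 5 ^ (d - 1) := by
        have h51 : (5:ℕ) ^ d = 5 * 5 ^ (d - 1) := by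
          rw [← pow_succ', show d - 1 + 1 = d by omega]
        calc 5 * (2 ^ a + 3) = 2 ^ a * 5 + 15 := by ring
        _ = X + 3 * i := by rw [hab, hi5]
        _ = 5 ^ d := hcd
        _ = 5 * 5 ^ (d - 1) := h51
      have heq : 2 ^ a + 3 = 5 ^ (d - 1) := Nat.eq_of_mul_eq_mul_left (by norm_num) hfin
      exact E4 (d - 1) a ha5 heq.symm
end

section
/- Let p be a prime, s ≥ p a positive integer, d ≥ 3, and l_0 an integer with 1 ≤ l_0 ≤ d − 1 < p. If r_0 ≤ s is chosen so that ord_p(l_0 + r_0 d) is maximal among 0 ≤ r ≤ s, then ord_p(l_0(l_0+d)(l_0+2d)···(l_0+sd)) ≤ ord_p(l_0 + r_0 d) + ord_p(r_0!) + ord_p((s−r_0)!) ≤ log(l_0+sd)/log p + s/(p−1). -/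
/-!
If `p ∣ d`, no term `l₀ + r d` is divisible by `p`, since `0 < l₀ < p`. Otherwise a power
of `p` dividing both `l₀ + r d` and `l₀ + r' d` divides `(r' - r) d`, hence `r' - r`.
Comparing each term with the one of maximal valuation at `r₀`, the terms before `r₀`
contribute at most `ord_p(r₀!)` and those after it at most `ord_p((s - r₀)!)`. The numerical
bound follows from `p ^ ord_p(n) ≤ n` and Legendre's formula `(p - 1) ord_p(n!) ≤ n`.
-/

open Finset

section PadicValuation

lemma padicValNat_le_log_div_log {p n N : ℕ} (h : n ≤ N) :
    (padicValNat p n : ℝ) ≤ Real.log N / Real.log p :=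
  calc (padicValNat p n : ℝ) ≤ Nat.log p N := by
        exact_mod_cast (padicValNat_le_nat_log n).trans (Nat.log_mono_right h)
    _ ≤ Real.logb p N := Real.natLog_le_logb _ _
    _ = Real.log N / Real.log p := (Real.log_div_log).symm

variable {p : ℕ} [Fact p.Prime]

lemma padicValNat_finset_prod {ι : Type*} (S : Finset ι) (f : ι → ℕ)
    (hf : ∀ i ∈ S, f i ≠ 0) :
    padicValNat p (∏ i ∈ S, f i) = ∑ i ∈ S, padicValNat p (f i) := by
  have hp : p.Prime := Fact.out
  rw [← Nat.factorization_def _ hp, Nat.factorization_prod hf, Finsupp.finsetSum_apply]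
  exact sum_congr rfl fun i _ => Nat.factorization_def _ hp

lemma padicValNat_factorial_eq_sum (n : ℕ) :
    padicValNat p n.factorial = ∑ j ∈ range n, padicValNat p (j + 1) := by
  rw [← prod_range_add_one_eq_factorial, padicValNat_finset_prod _ _ fun j _ => j.succ_ne_zero]

lemma padicValNat_factorial_le_div (n : ℕ) :
    (padicValNat p n.factorial : ℝ) ≤ n / (p - 1) := by
  have hp : 1 < p := (Fact.out : p.Prime).one_lt
  have hlegendre : (p - 1) * padicValNat p n.factorial ≤ n := by
    rw [sub_one_mul_padicValNat_factorial]
    exact Nat.sub_le _ _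
  have hcast : ((p - 1 : ℕ) : ℝ) = p - 1 := by rw [Nat.cast_sub hp.le, Nat.cast_one]
  rw [le_div_iff₀ (by rw [← hcast]; exact_mod_cast Nat.sub_pos_of_lt hp), mul_comm, ← hcast]
  exact_mod_cast hlegendre

end PadicValuation

section ArithmeticProgression

variable {p l d : ℕ}

lemma min_padicValNat_add_mul_le [Fact p.Prime] (hpd : ¬p ∣ d) {r r' : ℕ} (hr : r < r') :
    min (padicValNat p (l + r * d)) (padicValNat p (l + r' * d)) ≤ padicValNat p (r' - r) := by
  set k := min (padicValNat p (l + r * d)) (padicValNat p (l + r' * d))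
  have hdvd : p ^ k ∣ l + r * d :=
    (pow_dvd_pow p (min_le_left _ _)).trans pow_padicValNat_dvd
  have hdvd' : p ^ k ∣ l + r' * d :=
    (pow_dvd_pow p (min_le_right _ _)).trans pow_padicValNat_dvd
  have hdiff : l + r' * d - (l + r * d) = (r' - r) * d := by
    rw [Nat.sub_mul, Nat.add_sub_add_left]
  have hcop : Nat.Coprime (p ^ k) d :=
    ((Nat.Prime.coprime_iff_not_dvd Fact.out).mpr hpd).pow_left k
  have hk : p ^ k ∣ r' - r :=
    hcop.dvd_of_dvd_mul_right (hdiff ▸ Nat.dvd_sub hdvd' hdvd)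
  exact (padicValNat_dvd_iff_le (Nat.sub_ne_zero_of_lt hr)).mp hk

lemma not_dvd_add_mul (hpd : p ∣ d) (hpl : ¬p ∣ l) (r : ℕ) : ¬p ∣ l + r * d := fun h =>
  hpl ((Nat.dvd_add_left (hpd.mul_left r)).mp h)

lemma padicValNat_prod_add_mul_eq_zero (hp : p.Prime) (hpd : p ∣ d) (hpl : ¬p ∣ l)
    (S : Finset ℕ) : padicValNat p (∏ r ∈ S, (l + r * d)) = 0 := by
  refine padicValNat.eq_zero_of_not_dvd fun h => ?_
  obtain ⟨r, -, hr⟩ := (Prime.dvd_finsetProd_iff hp.prime _).mp h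
  exact not_dvd_add_mul hpd hpl r hr

lemma padicValNat_prod_add_mul_le [Fact p.Prime] (hpd : ¬p ∣ d) (hl : l ≠ 0) {s r₀ : ℕ}
    (hr₀ : r₀ ≤ s)
    (hmax : ∀ r : ℕ, r ≤ s → padicValNat p (l + r * d) ≤ padicValNat p (l + r₀ * d)) :
    padicValNat p (∏ r ∈ range (s + 1), (l + r * d))
      ≤ padicValNat p (l + r₀ * d) + padicValNat p r₀.factorial
        + padicValNat p (s - r₀).factorial := by
  have hsplit : s + 1 = r₀ + 1 + (s - r₀) := by omega
  rw [padicValNat_finset_prod _ _ fun r _ => by positivity, hsplit, sum_range_add,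
    sum_range_succ, padicValNat_factorial_eq_sum, padicValNat_factorial_eq_sum]
  have hbefore : ∑ r ∈ range r₀, padicValNat p (l + r * d)
      ≤ ∑ j ∈ range r₀, padicValNat p (j + 1) := by
    conv_rhs => rw [← sum_range_reflect]
    refine sum_le_sum fun r hr => ?_
    have hr : r < r₀ := mem_range.mp hr
    have := min_padicValNat_add_mul_le (l := l) hpd hr
    rw [min_eq_left (hmax r (by omega))] at this
    rwa [show r₀ - 1 - r + 1 = r₀ - r by omega]
  have hafter : ∑ j ∈ range (s - r₀), padicValNat p (l + (r₀ + 1 + j) * d)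
      ≤ ∑ j ∈ range (s - r₀), padicValNat p (j + 1) := by
    refine sum_le_sum fun j hj => ?_
    have hj : j < s - r₀ := mem_range.mp hj
    have := min_padicValNat_add_mul_le (l := l) hpd (show r₀ < r₀ + 1 + j by omega)
    rw [min_eq_right (hmax _ (by omega))] at this
    rwa [show r₀ + 1 + j - r₀ = j + 1 by omega] at this
  omega

end ArithmeticProgression

theorem stmt15_general (p : ℕ) (hp : p.Prime) (s d l₀ : ℕ)
    (hl1 : 1 ≤ l₀) (hld : l₀ ≤ d - 1) (hdp : d - 1 < p)
    (r₀ : ℕ) (hr₀ : r₀ ≤ s)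
    (hmax : ∀ r : ℕ, r ≤ s →
      padicValNat p (l₀ + r * d) ≤ padicValNat p (l₀ + r₀ * d)) :
    padicValNat p (∏ r ∈ Finset.range (s + 1), (l₀ + r * d))
      ≤ padicValNat p (l₀ + r₀ * d) + padicValNat p (Nat.factorial r₀)
        + padicValNat p (Nat.factorial (s - r₀))
    ∧ ((padicValNat p (l₀ + r₀ * d) + padicValNat p (Nat.factorial r₀)
        + padicValNat p (Nat.factorial (s - r₀)) : ℝ)
      ≤ Real.log (l₀ + s * d) / Real.log p + s / (p - 1)) := by
  have := Fact.mk hp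
  have hpl : ¬p ∣ l₀ := fun h => absurd (Nat.le_of_dvd (by omega) h) (by omega)
  refine ⟨?_, ?_⟩
  · by_cases hpd : p ∣ d
    · rw [padicValNat_prod_add_mul_eq_zero hp hpd hpl]
      exact Nat.zero_le _
    · exact padicValNat_prod_add_mul_le hpd (by omega) hr₀ hmax
  · have hterm := padicValNat_le_log_div_log (p := p)
      (show l₀ + r₀ * d ≤ l₀ + s * d by gcongr)
    have hbefore := padicValNat_factorial_le_div (p := p) r₀
    have hafter := padicValNat_factorial_le_div (p := p) (s - r₀)
    have hsum : (r₀ : ℝ) / (p - 1) + ((s - r₀ : ℕ) : ℝ) / (p - 1) = s / (p - 1) := by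
      rw [Nat.cast_sub hr₀]; ring
    push_cast at hterm
    linarith

/-- Bound on the `p`-adic valuation of a product of terms in an arithmetic
progression: with `r₀` achieving the maximal valuation among the terms,
`ord_p(∏_{r=0}^{s} (l₀ + r d)) ≤ ord_p(l₀ + r₀ d) + ord_p(r₀!) + ord_p((s-r₀)!)
≤ log(l₀ + s d)/log p + s/(p-1)`. -/
theorem stmt15 (p : ℕ) (hp : p.Prime) (s d l₀ : ℕ) (hsp : p ≤ s) (hd : 3 ≤ d)
    (hl1 : 1 ≤ l₀) (hld : l₀ ≤ d - 1) (hdp : d - 1 < p)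
    (r₀ : ℕ) (hr₀ : r₀ ≤ s)
    (hmax : ∀ r : ℕ, r ≤ s →
      padicValNat p (l₀ + r * d) ≤ padicValNat p (l₀ + r₀ * d)) :
    padicValNat p (∏ r ∈ Finset.range (s + 1), (l₀ + r * d))
      ≤ padicValNat p (l₀ + r₀ * d) + padicValNat p (Nat.factorial r₀)
        + padicValNat p (Nat.factorial (s - r₀))
    ∧ ((padicValNat p (l₀ + r₀ * d) + padicValNat p (Nat.factorial r₀)
        + padicValNat p (Nat.factorial (s - r₀)) : ℝ)
      ≤ Real.log (l₀ + s * d) / Real.log p + s / (p - 1)) :=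
  stmt15_general p hp s d l₀ hl1 hld hdp r₀ hr₀ hmax
end
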